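/- arXiv:1309.0533 — 6 statements merged into one kernel-verified Lean document; each statement's English description precedes it below -/
import Mathlib

section
/- For every compact set Σ ⊆ ℂ: (i) Σ ⊆ Q(Σ); (ii) Σ ∩ ℝ = Q(Σ) ∩ ℝ; (iii) z ∈ Q(Σ) if and only if conj(z) ∈ Q(Σ). -/
open scoped ComplexConjugate
open Complex

noncomputable section

/-- `Σ_z := {(λ − z)(conj λ − z) : λ ∈ Σ}`. -/
def sigmaSet (S : Set ℂ) (z : ℂ) : Set ℂ := (fun l => (l - z) * ((conj l) - z)) '' S

/-- `Q(Σ) := {z : 0 ∈ closed convex hull of Σ_z}`. -/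
def QSet (S : Set ℂ) : Set ℂ := {z | (0 : ℂ) ∈ closure (convexHull ℝ (sigmaSet S z))}

/-
For `z ∈ Σ` the point `0` lies in `Σ_z` itself, and conjugation maps `Σ_z` onto `Σ_{conj z}`.
For real `r`, every point `(λ - r)(conj λ - r) = |λ - r|²` of `Σ_r` has real part at least
`dist(r, Σ)²`, a closed convex condition; so `0` in the closed convex hull forces
`dist(r, Σ) = 0`, i.e. `r ∈ Σ` as `Σ` is closed.
-/

open Metric

lemma mem_QSet_of_mem {S : Set ℂ} {z : ℂ} (hz : z ∈ S) : z ∈ QSet S :=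
  subset_closure <| subset_convexHull ℝ _ ⟨z, hz, by ring⟩

lemma sigmaSet_conj (S : Set ℂ) (z : ℂ) : sigmaSet S (conj z) = conj '' sigmaSet S z := by
  rw [sigmaSet, sigmaSet, ← Set.image_comp]
  refine Set.image_congr fun l _ => ?_
  simp only [Function.comp_apply, map_mul, map_sub, conj_conj]
  ring

lemma conj_mem_QSet {S : Set ℂ} {z : ℂ} (h : z ∈ QSet S) : conj z ∈ QSet S := by
  have hmaps : conj '' closure (convexHull ℝ (sigmaSet S z)) ⊆
      closure (convexHull ℝ (sigmaSet S (conj z))) := by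
    rw [sigmaSet_conj]
    convert image_closure_subset_closure_image continuous_conj using 2
    exact (conjLIE.toLinearEquiv.toLinearMap.image_convexHull _).symm
  exact hmaps ⟨0, h, map_zero conj⟩

lemma sigmaSet_ofReal_subset (S : Set ℂ) (r : ℝ) :
    sigmaSet S r ⊆ {w : ℂ | infDist (r : ℂ) S ^ 2 ≤ w.re} := by
  rintro _ ⟨l, hl, rfl⟩
  have hnormSq : (l - r) * (conj l - r) = normSq (l - r) := by
    rw [← mul_conj, map_sub, conj_ofReal]
  change infDist (r : ℂ) S ^ 2 ≤ ((l - r) * (conj l - r)).re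
  rw [hnormSq, ofReal_re, normSq_eq_norm_sq, ← dist_eq, dist_comm]
  exact pow_le_pow_left₀ infDist_nonneg (infDist_le_dist_of_mem hl) 2

lemma infDist_eq_zero_of_ofReal_mem_QSet {S : Set ℂ} {r : ℝ} (h : (r : ℂ) ∈ QSet S) :
    infDist (r : ℂ) S = 0 := by
  have hre : infDist (r : ℂ) S ^ 2 ≤ (0 : ℂ).re :=
    closure_minimal (convexHull_min (sigmaSet_ofReal_subset S r) (convex_halfSpace_re_ge _))
      (isClosed_le continuous_const continuous_re) h
  rw [zero_re] at hre
  exact pow_eq_zero_iff two_ne_zero |>.mp (le_antisymm hre (sq_nonneg _))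

lemma ofReal_mem_of_mem_QSet {S : Set ℂ} (hS : IsClosed S) {r : ℝ} (h : (r : ℂ) ∈ QSet S) :
    (r : ℂ) ∈ S := by
  rcases S.eq_empty_or_nonempty with rfl | hne
  · simp [QSet, sigmaSet] at h
  · rw [← hS.closure_eq, mem_closure_iff_infDist_zero hne]
    exact infDist_eq_zero_of_ofReal_mem_QSet h

/-- Lemma 2.1: for compact `Σ ⊆ ℂ`, (i) `Σ ⊆ Q(Σ)`, (ii) `Σ ∩ ℝ = Q(Σ) ∩ ℝ`, and
(iii) `z ∈ Q(Σ)` iff `conj z ∈ Q(Σ)`. -/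
theorem stmt1 (S : Set ℂ) (hS : IsCompact S) :
    S ⊆ QSet S ∧
    S ∩ Set.range ((↑) : ℝ → ℂ) = QSet S ∩ Set.range ((↑) : ℝ → ℂ) ∧
    ∀ z : ℂ, z ∈ QSet S ↔ conj z ∈ QSet S := by
  refine ⟨fun _ => mem_QSet_of_mem, ?_, fun _ => ⟨conj_mem_QSet, fun h => ?_⟩⟩
  · refine subset_antisymm (Set.inter_subset_inter_left _ fun _ => mem_QSet_of_mem) ?_
    rintro _ ⟨hQ, r, rfl⟩
    exact ⟨ofReal_mem_of_mem_QSet hS.isClosed hQ, r, rfl⟩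
  · simpa using conj_mem_QSet h

end
end

section
/- Let λ₁, λ₂ ∈ ℂ and for t ∈ [0,1] define γ(λ₁,λ₂)^±(t) := t·Re λ₁ + (1−t)·Re λ₂ ± i·√( t(1−t)(Re λ₁ − Re λ₂)² + t(Im λ₁)² + (1−t)(Im λ₂)² ). Then Q({λ₁, λ₂}) = {γ(λ₁,λ₂)^+(t) : t ∈ [0,1]} ∪ {γ(λ₁,λ₂)^−(t) : t ∈ [0,1]}. -/
/-!
`Σ_z` of a two-point set is a pair, so its closed convex hull is a segment, and `z ∈ Q` iff some
convex combination `t (λ₁ - z)(λ̄₁ - z) + (1 - t)(λ₂ - z)(λ̄₂ - z)` vanishes. This is the monic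
quadratic `z² - 2az + (t|λ₁|² + (1 - t)|λ₂|²)` with `a = t Re λ₁ + (1 - t) Re λ₂`, and since
`t|λ₁|² + (1 - t)|λ₂|² - a²` is exactly the radicand in `γ^±`, nonnegative for `t ∈ [0,1]`,
it factors as `(z - γ⁺(t)) (z - γ⁻(t))`.
-/

open scoped ComplexConjugate
open Complex

noncomputable section

/-- The curve `γ(λ₁,λ₂)^+`. -/
def gammaPlus (l₁ l₂ : ℂ) (t : ℝ) : ℂ :=
  (↑(t * l₁.re + (1 - t) * l₂.re) : ℂ) +
    Complex.I * ↑(Real.sqrt (t * (1 - t) * (l₁.re - l₂.re) ^ 2 + t * l₁.im ^ 2 +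
      (1 - t) * l₂.im ^ 2))

/-- The curve `γ(λ₁,λ₂)^−`. -/
def gammaMinus (l₁ l₂ : ℂ) (t : ℝ) : ℂ :=
  (↑(t * l₁.re + (1 - t) * l₂.re) : ℂ) -
    Complex.I * ↑(Real.sqrt (t * (1 - t) * (l₁.re - l₂.re) ^ 2 + t * l₁.im ^ 2 +
      (1 - t) * l₂.im ^ 2))

lemma mem_QSet_pair_iff {l₁ l₂ z : ℂ} :
    z ∈ QSet {l₁, l₂} ↔ ∃ t ∈ Set.Icc (0 : ℝ) 1,
      t • ((l₁ - z) * (conj l₁ - z)) + (1 - t) • ((l₂ - z) * (conj l₂ - z)) = 0 := by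
  rw [QSet, Set.mem_ofPred_eq, sigmaSet, Set.image_pair,
    ((Set.toFinite _).isClosed_convexHull ℝ).closure_eq, convexHull_pair, segment_symm,
    segment_eq_image]
  simp only [Set.mem_image, add_comm]

lemma sub_gammaPlus_mul_sub_gammaMinus {l₁ l₂ : ℂ} {t : ℝ} (ht : t ∈ Set.Icc (0 : ℝ) 1)
    (z : ℂ) : (z - gammaPlus l₁ l₂ t) * (z - gammaMinus l₁ l₂ t) =
      t • ((l₁ - z) * (conj l₁ - z)) + (1 - t) • ((l₂ - z) * (conj l₂ - z)) := by
  obtain ⟨h0, h1⟩ := ht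
  rw [gammaPlus, gammaMinus]
  set r := Real.sqrt (t * (1 - t) * (l₁.re - l₂.re) ^ 2 + t * l₁.im ^ 2 + (1 - t) * l₂.im ^ 2)
  have hr : r ^ 2 = t * (1 - t) * (l₁.re - l₂.re) ^ 2 + t * l₁.im ^ 2 + (1 - t) * l₂.im ^ 2 :=
    Real.sq_sqrt (by have := mul_nonneg h0 (sub_nonneg.2 h1); positivity)
  apply Complex.ext <;>
    simp only [mul_re, mul_im, sub_re, sub_im, add_re, add_im, ofReal_re, ofReal_im, I_re, I_im,
      conj_re, conj_im, real_smul]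
  · linear_combination hr
  · ring

/-- `Q({λ₁, λ₂})` is the union of the curves `γ(λ₁,λ₂)^±([0,1])`. -/
theorem stmt2 (l₁ l₂ : ℂ) :
    QSet {l₁, l₂} = gammaPlus l₁ l₂ '' Set.Icc 0 1 ∪ gammaMinus l₁ l₂ '' Set.Icc 0 1 := by
  ext z
  simp only [mem_QSet_pair_iff, Set.mem_union, Set.mem_image]
  constructor
  · rintro ⟨t, ht, h⟩
    rw [← sub_gammaPlus_mul_sub_gammaMinus ht, mul_eq_zero, sub_eq_zero, sub_eq_zero] at h
    exact h.imp (fun h ↦ ⟨t, ht, h.symm⟩) (fun h ↦ ⟨t, ht, h.symm⟩)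
  · rintro (⟨t, ht, rfl⟩ | ⟨t, ht, rfl⟩) <;>
      exact ⟨t, ht, by rw [← sub_gammaPlus_mul_sub_gammaMinus ht]; simp⟩

end
end

section
/- Let Σ ⊆ ℂ be compact. Then z ∈ Q(Σ) if and only if there exist λ₁, λ₂, λ₃ ∈ Σ and s, t ∈ [0,1] such that Re z = t·Re λ₁ + (1−t)s·Re λ₂ + (1−t)(1−s)·Re λ₃ and (Im z)² = st(1−t)(Re λ₁ − Re λ₂)² + t(1−t)(1−s)(Re λ₁ − Re λ₃)² + (1−t)²s(1−s)(Re λ₂ − Re λ₃)² + t(Im λ₁)² + (1−t)s(Im λ₂)² + (1−t)(1−s)(Im λ₃)². -/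
/-!
Write `λ = a + i b` and `z = x + i y`. Then `(λ - z)(conj λ - z) = (a - x)² + b² - y² - 2 i y (a - x)`,
so a convex combination of points of `Σ_z` vanishes exactly when `x` is the weighted mean of the
`a`'s and `y²` is the weighted mean of `(a - x)² + b²`; for `y = 0` the real part alone forces the
first condition, its terms being nonnegative. Since `Σ_z` is compact, so is its convex hull, and by
Carathéodory's theorem in the plane three points of `Σ_z` suffice. The weights
`(t, (1 - t) s, (1 - t) (1 - s))` parametrize the 2-simplex, and the weighted variance of
`a₁, a₂, a₃` expands into the pairwise terms of the statement.
-/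

open scoped ComplexConjugate
open Complex

noncomputable section

section Caratheodory

open Function

variable {E : Type*} [AddCommGroup E] [Module ℝ E]

theorem exists_fin_sum_smul_eq_of_card_le {ι : Type*} [Fintype ι] {n : ℕ}
    (hcard : Fintype.card ι ≤ n + 1) {w : ι → ℝ} (hw0 : ∀ i, 0 ≤ w i) (hw1 : ∑ i, w i = 1)
    (q : ι → E) :
    ∃ w' ∈ stdSimplex ℝ (Fin (n + 1)), ∃ p : Fin (n + 1) → E,
      (∀ j, p j ∈ Set.range q) ∧ ∑ j, w' j • p j = ∑ i, w i • q i := by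
  obtain ⟨e⟩ := Embedding.nonempty_iff_card_le.2 (hcard.trans_eq (Fintype.card_fin _).symm)
  have : Nonempty ι := by
    by_contra h
    simp [not_nonempty_iff.1 h] at hw1
  obtain ⟨i₀⟩ := this
  have hzero : ∀ j ∉ Set.range e, extend e w 0 j = 0 := fun j hj =>
    extend_apply' _ _ _ (by simpa using hj)
  refine ⟨extend e w 0, ⟨fun j => ?_, ?_⟩, extend e q fun _ => q i₀, fun j => ?_, ?_⟩
  · by_cases hj : j ∈ Set.range e
    · obtain ⟨i, rfl⟩ := hj
      simpa [e.injective.extend_apply] using hw0 i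
    · simp [hzero j hj]
  · rw [← hw1]
    exact (Fintype.sum_of_injective e e.injective _ _ hzero
      fun i => (e.injective.extend_apply _ _ _).symm).symm
  · by_cases hj : j ∈ Set.range e
    · obtain ⟨i, rfl⟩ := hj
      simp [e.injective.extend_apply]
    · simp [extend_apply' _ _ _ (by simpa using hj)]
  · refine (Fintype.sum_of_injective e e.injective _ _ (fun j hj => by simp [hzero j hj])
      fun i => ?_).symm
    simp [e.injective.extend_apply]

theorem mem_convexHull_iff_exists_fin [FiniteDimensional ℝ E] {A : Set E} {n : ℕ}
    (hn : Module.finrank ℝ E ≤ n) {x : E} :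
    x ∈ convexHull ℝ A ↔ ∃ w ∈ stdSimplex ℝ (Fin (n + 1)), ∃ p : Fin (n + 1) → E,
      (∀ i, p i ∈ A) ∧ ∑ i, w i • p i = x := by
  constructor
  · intro hx
    obtain ⟨ι, _, q, w, hqA, hq, hw0, hw1, rfl⟩ := eq_pos_convex_span_of_mem_convexHull hx
    have hcard : Fintype.card ι ≤ n + 1 := hq.card_le_finrank_succ.trans
      (Nat.succ_le_succ ((Submodule.finrank_le _).trans hn))
    obtain ⟨w', hw', p, hp, hsum⟩ :=
      exists_fin_sum_smul_eq_of_card_le hcard (fun i => (hw0 i).le) hw1 q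
    exact ⟨w', hw', p, fun j => hqA (hp j), hsum⟩
  · rintro ⟨w, ⟨hw0, hw1⟩, p, hpA, rfl⟩
    exact (convex_convexHull ℝ A).sum_mem (fun i _ => hw0 i) hw1
      fun i _ => subset_convexHull ℝ A (hpA i)

theorem convexHull_eq_image_stdSimplex [FiniteDimensional ℝ E] (A : Set E) :
    convexHull ℝ A =
      (fun q : (Fin (Module.finrank ℝ E + 1) → ℝ) × (Fin (Module.finrank ℝ E + 1) → E) =>
        ∑ i, q.1 i • q.2 i) '' (stdSimplex ℝ _ ×ˢ Set.univ.pi fun _ => A) := by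
  ext x
  rw [mem_convexHull_iff_exists_fin le_rfl]
  simp [and_assoc]

end Caratheodory

theorem IsCompact.convexHull {E : Type*} [NormedAddCommGroup E] [NormedSpace ℝ E]
    [FiniteDimensional ℝ E] {A : Set E} (hA : IsCompact A) : IsCompact (convexHull ℝ A) := by
  rw [convexHull_eq_image_stdSimplex]
  exact ((isCompact_stdSimplex ℝ _).prod (isCompact_univ_pi fun _ => hA)).image (by fun_prop)

theorem re_sub_mul_conj_sub (l z : ℂ) :
    ((l - z) * (conj l - z)).re = (l.re - z.re) ^ 2 + l.im ^ 2 - z.im ^ 2 := by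
  simp only [mul_re, sub_re, sub_im, conj_re, conj_im]
  ring

theorem im_sub_mul_conj_sub (l z : ℂ) :
    ((l - z) * (conj l - z)).im = -2 * z.im * (l.re - z.re) := by
  simp only [mul_im, sub_re, sub_im, conj_re, conj_im]
  ring

theorem sum_smul_sub_mul_conj_sub_eq_zero_iff {ι : Type*} {s : Finset ι} {w : ι → ℝ}
    (hw0 : ∀ i ∈ s, 0 ≤ w i) (hw1 : ∑ i ∈ s, w i = 1) (l : ι → ℂ) (z : ℂ) :
    ∑ i ∈ s, w i • ((l i - z) * (conj (l i) - z)) = 0 ↔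
      z.re = ∑ i ∈ s, w i * (l i).re ∧
        z.im ^ 2 = ∑ i ∈ s, w i * (((l i).re - z.re) ^ 2 + (l i).im ^ 2) := by
  set V := ∑ i ∈ s, w i * (((l i).re - z.re) ^ 2 + (l i).im ^ 2)
  have hre : (∑ i ∈ s, w i • ((l i - z) * (conj (l i) - z))).re = V - z.im ^ 2 := by
    simp_rw [re_sum, smul_re, re_sub_mul_conj_sub, smul_eq_mul, mul_sub,
      Finset.sum_sub_distrib, ← Finset.sum_mul, hw1, one_mul, V]
  have him : (∑ i ∈ s, w i • ((l i - z) * (conj (l i) - z))).im =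
      -2 * z.im * (∑ i ∈ s, w i * (l i).re - z.re) := by
    simp_rw [im_sum, smul_im, im_sub_mul_conj_sub, smul_eq_mul, mul_left_comm (w _),
      ← Finset.mul_sum, mul_sub, Finset.sum_sub_distrib, ← Finset.sum_mul, hw1, one_mul]
    ring
  rw [Complex.ext_iff, hre, him, zero_re, zero_im]
  constructor
  · rintro ⟨hV, hM⟩
    refine ⟨?_, by linarith⟩
    rcases eq_or_ne z.im 0 with hy | hy
    · have hterm := (Finset.sum_eq_zero_iff_of_nonneg fun i hi =>
        mul_nonneg (hw0 i hi) (by positivity)).1 (show V = 0 by rw [hy] at hV; linarith)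
      have hdev : ∑ i ∈ s, w i * ((l i).re - z.re) = 0 := Finset.sum_eq_zero fun i hi => by
        have := hterm i hi
        have := hw0 i hi
        nlinarith [mul_nonneg this (sq_nonneg (l i).im)]
      simp_rw [mul_sub, Finset.sum_sub_distrib, ← Finset.sum_mul, hw1, one_mul] at hdev
      linarith
    · have := (mul_eq_zero.1 hM).resolve_left (by simpa using hy)
      linarith
  · rintro ⟨hx, hy⟩
    exact ⟨by linarith, by rw [← hx]; ring⟩

theorem mem_stdSimplex_fin_three_iff {c : Fin 3 → ℝ} :
    c ∈ stdSimplex ℝ (Fin 3) ↔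
      ∃ s ∈ Set.Icc (0 : ℝ) 1, ∃ t ∈ Set.Icc (0 : ℝ) 1, c = ![t, (1 - t) * s, (1 - t) * (1 - s)] := by
  simp only [stdSimplex, Set.mem_ofPred_eq, Fin.sum_univ_three]
  constructor
  · rintro ⟨hc, hsum⟩
    have h₀ := hc 0
    have h₁ := hc 1
    have h₂ := hc 2
    refine ⟨c 1 / (c 1 + c 2), ⟨by positivity, div_le_one_of_le₀ (by linarith) (by linarith)⟩,
      c 0, ⟨h₀, by linarith⟩, ?_⟩
    rw [show 1 - c 0 = c 1 + c 2 by linarith]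
    -- when `c 1 + c 2 = 0`, both sides vanish whatever `s` is
    rcases eq_or_ne (c 1 + c 2) 0 with h | h
    · ext i
      fin_cases i <;> simp [h] <;> linarith
    · ext i
      fin_cases i
      · rfl
      · simp [mul_div_cancel₀ _ h]
      · simp [mul_sub, mul_div_cancel₀ _ h]
  · rintro ⟨s, ⟨hs0, hs1⟩, t, ⟨ht0, ht1⟩, rfl⟩
    refine ⟨fun i => ?_, by simp; ring⟩
    fin_cases i <;> simp <;> nlinarith

theorem mem_QSet_iff_exists_fin_three {S : Set ℂ} (hS : IsCompact S) {z : ℂ} :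
    z ∈ QSet S ↔ ∃ c ∈ stdSimplex ℝ (Fin 3), ∃ l : Fin 3 → ℂ, (∀ i, l i ∈ S) ∧
      z.re = ∑ i, c i * (l i).re ∧
        z.im ^ 2 = ∑ i, c i * (((l i).re - z.re) ^ 2 + (l i).im ^ 2) := by
  have hcompact : IsCompact (sigmaSet S z) := hS.image (by fun_prop)
  rw [QSet, Set.mem_ofPred_eq, hcompact.convexHull.isClosed.closure_eq,
    mem_convexHull_iff_exists_fin Complex.finrank_real_complex.le]
  refine exists_congr fun c => and_congr_right fun hc => ⟨?_, ?_⟩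
  · rintro ⟨p, hp, hsum⟩
    choose l hlS hl using hp
    refine ⟨l, hlS, (sum_smul_sub_mul_conj_sub_eq_zero_iff (fun i _ => hc.1 i) hc.2 l z).1 ?_⟩
    simpa only [hl] using hsum
  · rintro ⟨l, hlS, hl⟩
    exact ⟨_, fun i => ⟨l i, hlS i, rfl⟩,
      (sum_smul_sub_mul_conj_sub_eq_zero_iff (fun i _ => hc.1 i) hc.2 l z).2 hl⟩

theorem sq_dev_sum_three_eq {t s a₁ a₂ a₃ x : ℝ}
    (hx : x = t * a₁ + (1 - t) * s * a₂ + (1 - t) * (1 - s) * a₃) :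
    t * (a₁ - x) ^ 2 + (1 - t) * s * (a₂ - x) ^ 2 + (1 - t) * (1 - s) * (a₃ - x) ^ 2 =
      s * t * (1 - t) * (a₁ - a₂) ^ 2 + t * (1 - t) * (1 - s) * (a₁ - a₃) ^ 2 +
        (1 - t) ^ 2 * s * (1 - s) * (a₂ - a₃) ^ 2 := by
  subst hx
  ring

/-- Parametric form of Theorem 2.2: `z ∈ Q(Σ)` iff there are `λ₁, λ₂, λ₃ ∈ Σ` and
`s, t ∈ [0,1]` realising the stated formulas for `Re z` and `(Im z)²`. -/
theorem stmt3 (S : Set ℂ) (hS : IsCompact S) (z : ℂ) :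
    z ∈ QSet S ↔
      ∃ l₁ ∈ S, ∃ l₂ ∈ S, ∃ l₃ ∈ S, ∃ s ∈ Set.Icc (0:ℝ) 1, ∃ t ∈ Set.Icc (0:ℝ) 1,
        z.re = t * l₁.re + (1 - t) * s * l₂.re + (1 - t) * (1 - s) * l₃.re ∧
        z.im ^ 2 =
          s * t * (1 - t) * (l₁.re - l₂.re) ^ 2 + t * (1 - t) * (1 - s) * (l₁.re - l₃.re) ^ 2 +
          (1 - t) ^ 2 * s * (1 - s) * (l₂.re - l₃.re) ^ 2 + t * l₁.im ^ 2 +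
          (1 - t) * s * l₂.im ^ 2 + (1 - t) * (1 - s) * l₃.im ^ 2 := by
  simp only [mem_QSet_iff_exists_fin_three hS, mem_stdSimplex_fin_three_iff, Fin.sum_univ_three]
  constructor
  · rintro ⟨_, ⟨s, hs, t, ht, rfl⟩, l, hl, hre, him⟩
    simp only [Matrix.cons_val] at hre him
    refine ⟨l 0, hl 0, l 1, hl 1, l 2, hl 2, s, hs, t, ht, hre, ?_⟩
    linear_combination him + sq_dev_sum_three_eq hre
  · rintro ⟨l₁, h₁, l₂, h₂, l₃, h₃, s, hs, t, ht, hre, him⟩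
    refine ⟨_, ⟨s, hs, t, ht, rfl⟩, ![l₁, l₂, l₃], fun i => by fin_cases i <;> assumption, ?_⟩
    simp only [Matrix.cons_val]
    exact ⟨hre, by linear_combination him - sq_dev_sum_three_eq hre⟩

end
end

section
/- Let Σ ⊆ ℂ be compact and ε > 0. Then Q([Σ]_ε) = [Q(Σ)]_ε. -/
/-!
Lift `λ ↦ (Re λ, |λ|²)` to the paraboloid. Then `Σ_z` is the image of the lifted `Σ` under the
real-affine map `(t, s) ↦ z² - 2tz + s`, whose only zero on the epigraph `t² ≤ s` is the lift of
`z`. So, for bounded `Σ`, `z ∈ Q(Σ)` iff the lift of `z` lies in the closed convex hull `K(Σ)` of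
the lifted `Σ`; dually, `Q(Σ)` is the intersection of the sets `a Re ζ + b |ζ|² ≤ u` (discs and
disc complements centred on `ℝ`, vertical half-planes) that contain `Σ`.

`[Q(Σ)]_ε ⊆ Q([Σ]_ε)`: shrinking by `ε` such a set containing `[Σ]_ε` gives a set of the same
kind containing `Σ`.

`Q([Σ]_ε) ⊆ [Q(Σ)]_ε`: a point `∑ cᵢ lift(μᵢ)` of the hull, `μᵢ ∈ [Σ]_ε`, is the lift of
`m ± i s`, where `m` is the `c`-mean of `Re μᵢ` and `s²` the `c`-variance of the `μᵢ` about `m`.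
Moving each `μᵢ` to a point `λᵢ ∈ Σ` within `ε` moves `(m, s)` by at most the `L²(c)` distance
of `μ` and `λ`, which is `≤ ε`, by the triangle inequality in `L²(c)`.
-/

open scoped ComplexConjugate
open Complex

noncomputable section

/-- Closed ε-neighbourhood `[Σ]_ε` of a set in `ℂ`. -/
def closedNbhd (S : Set ℂ) (ε : ℝ) : Set ℂ := {z | Metric.infDist z S ≤ ε}

open Metric Set

namespace Complex

lemma exists_norm_eq_one_mul (z : ℂ) : ∃ u : ℂ, ‖u‖ = 1 ∧ z = ‖z‖ * u :=
  ⟨_, norm_exp_ofReal_mul_I _, (norm_mul_exp_arg_mul_I z).symm⟩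

lemma normSq_sub_ofReal (ζ : ℂ) (p : ℝ) : normSq (ζ - p) = normSq ζ - 2 * p * ζ.re + p ^ 2 := by
  simp only [normSq_apply, sub_re, sub_im, ofReal_re, ofReal_im]
  ring

lemma sq_dist_ofReal (ζ : ℂ) (p : ℝ) : dist ζ p ^ 2 = normSq ζ - 2 * p * ζ.re + p ^ 2 := by
  rw [dist_eq, Complex.sq_norm, normSq_sub_ofReal]

lemma closedBall_subset_closedBall_iff {ζ x : ℂ} {ε r : ℝ} (hε : 0 ≤ ε) :
    closedBall ζ ε ⊆ closedBall x r ↔ dist ζ x + ε ≤ r := by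
  refine ⟨fun h => ?_, fun h => closedBall_subset_closedBall' (by linarith)⟩
  obtain ⟨u, hu, hζ⟩ := exists_norm_eq_one_mul (ζ - x)
  have hy : ζ + ε * u ∈ closedBall ζ ε := by
    simp [hu, abs_of_nonneg hε]
  have hyx : ζ + ε * u - x = (‖ζ - x‖ + ε : ℝ) * u := by
    push_cast
    linear_combination hζ
  have := h hy
  rwa [mem_closedBall, dist_eq, hyx, norm_mul, hu, mul_one, norm_real, Real.norm_eq_abs,
    abs_of_nonneg (by positivity), ← dist_eq] at this

lemma closedBall_subset_compl_ball_iff {ζ x : ℂ} {ε r : ℝ} (hε : 0 ≤ ε) (hr : 0 < r) :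
    closedBall ζ ε ⊆ (ball x r)ᶜ ↔ r + ε ≤ dist ζ x := by
  refine ⟨fun h => ?_, fun h => subset_compl_iff_disjoint_right.2
    (closedBall_disjoint_ball (by linarith))⟩
  by_contra hlt
  obtain ⟨u, hu, hζ⟩ := exists_norm_eq_one_mul (ζ - x)
  set t := min ε (dist ζ x)
  have ht : 0 ≤ t := le_min hε dist_nonneg
  have hy : ζ - t * u ∈ closedBall ζ ε := by
    rw [mem_closedBall, dist_eq, sub_sub_cancel_left, norm_neg, norm_mul, hu, mul_one, norm_real,
      Real.norm_eq_abs, abs_of_nonneg ht]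
    exact min_le_left _ _
  have hyx : ζ - t * u - x = (‖ζ - x‖ - t : ℝ) * u := by
    push_cast
    linear_combination hζ
  refine h hy ?_
  rw [mem_ball, dist_eq, hyx, norm_mul, hu, mul_one, norm_real, Real.norm_eq_abs, ← dist_eq,
    abs_of_nonneg (sub_nonneg.2 (min_le_right _ _))]
  rcases min_choice ε (dist ζ x) with h' | h' <;> simp only [t, h'] <;> linarith

end Complex

def parabolaLift (z : ℂ) : ℝ × ℝ := (z.re, normSq z)

def liftHull (S : Set ℂ) : Set (ℝ × ℝ) := closure (convexHull ℝ (parabolaLift '' S))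

def sigmaAffine (z : ℂ) : ℝ × ℝ →ᵃ[ℝ] ℂ :=
  ((LinearMap.fst ℝ ℝ ℝ).smulRight (-2 * z) + (LinearMap.snd ℝ ℝ ℝ).smulRight 1).toAffineMap +
    AffineMap.const ℝ (ℝ × ℝ) (z ^ 2)

lemma sigmaAffine_apply (z : ℂ) (p : ℝ × ℝ) : sigmaAffine z p = z ^ 2 - 2 * p.1 * z + p.2 := by
  simp only [sigmaAffine, AffineMap.coe_add, LinearMap.coe_toAffineMap, AffineMap.coe_const,
    Pi.add_apply, LinearMap.add_apply, LinearMap.coe_smulRight, LinearMap.fst_apply,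
    LinearMap.snd_apply, real_smul, Function.const_apply]
  ring

lemma continuous_parabolaLift : Continuous parabolaLift := by
  unfold parabolaLift; fun_prop

lemma sigmaAffine_parabolaLift (z l : ℂ) :
    sigmaAffine z (parabolaLift l) = (l - z) * (conj l - z) := by
  rw [sigmaAffine_apply, parabolaLift]
  linear_combination (norm := (push_cast; ring1)) z * add_conj l - mul_conj l

lemma sigmaSet_eq_image (S : Set ℂ) (z : ℂ) :
    sigmaSet S z = sigmaAffine z '' (parabolaLift '' S) := by
  rw [image_image]
  exact image_congr fun l _ => (sigmaAffine_parabolaLift z l).symm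

lemma parabolaLift_mem_epigraph (z : ℂ) : parabolaLift z ∈ {p : ℝ × ℝ | p.1 ^ 2 ≤ p.2} := by
  simp only [parabolaLift, mem_ofPred_eq, normSq_apply]
  nlinarith [sq_nonneg z.im]

lemma liftHull_subset_epigraph (S : Set ℂ) : liftHull S ⊆ {p : ℝ × ℝ | p.1 ^ 2 ≤ p.2} := by
  have hconv : Convex ℝ {p : ℝ × ℝ | p.1 ^ 2 ≤ p.2} := by
    simpa using (Even.convexOn_pow (𝕜 := ℝ) even_two).convex_epigraph
  refine closure_minimal (convexHull_min ?_ hconv) (isClosed_le (by fun_prop) continuous_snd)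
  rintro _ ⟨l, -, rfl⟩
  exact parabolaLift_mem_epigraph l

lemma sigmaAffine_eq_zero_iff {z : ℂ} {p : ℝ × ℝ} (hp : p.1 ^ 2 ≤ p.2) :
    sigmaAffine z p = 0 ↔ p = parabolaLift z := by
  refine ⟨fun h => ?_, fun h => by simpa [h] using sigmaAffine_parabolaLift z z⟩
  rw [sigmaAffine_apply, Complex.ext_iff] at h
  simp only [add_re, sub_re, ofReal_re, add_im, sub_im, ofReal_im, mul_re, mul_im, zero_re,
    zero_im, re_ofNat, im_ofNat, pow_two] at h
  obtain ⟨hre, him⟩ := h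
  have ht : p.1 = z.re := by
    rcases eq_or_ne z.im 0 with hy | hy
    · nlinarith [sq_nonneg (p.1 - z.re)]
    · have : z.im * (z.re - p.1) = 0 := by linarith
      linarith [(mul_eq_zero.1 this).resolve_left hy]
  refine Prod.ext ht ?_
  simp only [parabolaLift, normSq_apply]
  rw [ht] at hre
  linarith

lemma mem_QSet_of_parabolaLift_mem {S : Set ℂ} {z : ℂ} (h : parabolaLift z ∈ liftHull S) :
    z ∈ QSet S := by
  have h0 : (0 : ℂ) ∈ sigmaAffine z '' liftHull S :=
    ⟨_, h, (sigmaAffine_eq_zero_iff (parabolaLift_mem_epigraph z)).2 rfl⟩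
  rw [QSet, mem_ofPred_eq, sigmaSet_eq_image, ← AffineMap.image_convexHull]
  exact image_closure_subset_closure_image (sigmaAffine z).continuous_of_finiteDimensional h0

lemma isCompact_liftHull {S : Set ℂ} (hS : Bornology.IsBounded S) : IsCompact (liftHull S) := by
  have hL : Bornology.IsBounded (parabolaLift '' S) :=
    (hS.isCompact_closure.image continuous_parabolaLift).isBounded.subset
      (image_mono subset_closure)
  exact (isBounded_convexHull.2 hL).isCompact_closure

lemma mem_QSet_iff {S : Set ℂ} (hS : Bornology.IsBounded S) {z : ℂ} :
    z ∈ QSet S ↔ parabolaLift z ∈ liftHull S := by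
  refine ⟨fun h => ?_, mem_QSet_of_parabolaLift_mem⟩
  have hK := (isCompact_liftHull hS).image (sigmaAffine z).continuous_of_finiteDimensional
  rw [QSet, mem_ofPred_eq, sigmaSet_eq_image, ← AffineMap.image_convexHull] at h
  obtain ⟨p, hp, hp0⟩ := closure_minimal (image_mono subset_closure) hK.isClosed h
  rwa [← (sigmaAffine_eq_zero_iff (liftHull_subset_epigraph S hp)).1 hp0]

def liftHalfSpace (a b u : ℝ) : Set ℂ := {ζ | a * ζ.re + b * normSq ζ ≤ u}

lemma QSet_subset_liftHalfSpace {S : Set ℂ} (hS : Bornology.IsBounded S) {a b u : ℝ}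
    (h : S ⊆ liftHalfSpace a b u) : QSet S ⊆ liftHalfSpace a b u := by
  have hlin : IsLinearMap ℝ fun p : ℝ × ℝ => a * p.1 + b * p.2 :=
    ⟨fun p q => by simp only [Prod.fst_add, Prod.snd_add]; ring,
      fun c p => by simp only [Prod.smul_fst, Prod.smul_snd, smul_eq_mul]; ring⟩
  have hK : liftHull S ⊆ {p : ℝ × ℝ | a * p.1 + b * p.2 ≤ u} := by
    refine closure_minimal (convexHull_min ?_ (convex_halfSpace_le hlin u))
      (isClosed_le (by fun_prop) continuous_const)
    rintro _ ⟨l, hl, rfl⟩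
    exact h hl
  exact fun z hz => hK ((mem_QSet_iff hS).1 hz)

lemma mem_QSet_of_forall_liftHalfSpace {S : Set ℂ} {z : ℂ}
    (h : ∀ a b u, S ⊆ liftHalfSpace a b u → z ∈ liftHalfSpace a b u) : z ∈ QSet S := by
  refine mem_QSet_of_parabolaLift_mem (by_contra fun hz => ?_)
  obtain ⟨f, u, hf, hfz⟩ :=
    geometric_hahn_banach_closed_point (convex_convexHull ℝ _).closure isClosed_closure hz
  have hf_apply : ∀ p : ℝ × ℝ, f p = f (1, 0) * p.1 + f (0, 1) * p.2 := fun p => by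
    conv_lhs => rw [show p = p.1 • ((1 : ℝ), (0 : ℝ)) + p.2 • ((0 : ℝ), (1 : ℝ)) by ext <;> simp]
    rw [map_add, map_smul, map_smul, smul_eq_mul, smul_eq_mul, mul_comm p.1, mul_comm p.2]
  have hSH : S ⊆ liftHalfSpace (f (1, 0)) (f (0, 1)) u := fun l hl => by
    have := hf _ (subset_closure (subset_convexHull ℝ _ (mem_image_of_mem _ hl)))
    exact (hf_apply _ ▸ this).le
  have := hf_apply (parabolaLift z) ▸ hfz
  exact absurd (h _ _ _ hSH) (not_le.2 this)

lemma closedBall_subset_liftHalfSpace_zero_iff {ζ : ℂ} {ε : ℝ} (hε : 0 ≤ ε) (a u : ℝ) :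
    closedBall ζ ε ⊆ liftHalfSpace a 0 u ↔ ζ ∈ liftHalfSpace a 0 (u - |a| * ε) := by
  simp only [liftHalfSpace, zero_mul, add_zero, mem_ofPred_eq]
  constructor
  · intro h
    have hy : ζ + (ε * SignType.sign a : ℝ) ∈ closedBall ζ ε := by
      rcases lt_trichotomy a 0 with ha | rfl | ha <;> simp [abs_of_nonneg hε, *]
    have := h hy
    simp only [mem_ofPred_eq, add_re, ofReal_re] at this
    have hsign : a * (ε * SignType.sign a) = |a| * ε := by rw [← self_mul_sign a]; ring
    linarith
  · intro h w hw
    have hre : |(w - ζ).re| ≤ ε := (abs_re_le_norm _).trans (mem_closedBall_iff_norm.1 hw)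
    have := mul_le_mul_of_nonneg_left hre (abs_nonneg a)
    rw [← abs_mul, sub_re] at this
    simp only [mem_ofPred_eq]
    linarith [le_abs_self (a * (w.re - ζ.re))]

lemma closedBall_ofReal_eq_liftHalfSpace (p : ℝ) {r : ℝ} (hr : 0 ≤ r) :
    closedBall (p : ℂ) r = liftHalfSpace (-2 * p) 1 (r ^ 2 - p ^ 2) := by
  ext ζ
  rw [mem_closedBall, ← sq_le_sq₀ dist_nonneg hr, sq_dist_ofReal, liftHalfSpace, mem_ofPred_eq]
  constructor <;> intro h <;> linarith

lemma compl_ball_ofReal_eq_liftHalfSpace (p : ℝ) {r : ℝ} (hr : 0 ≤ r) :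
    (ball (p : ℂ) r)ᶜ = liftHalfSpace (2 * p) (-1) (p ^ 2 - r ^ 2) := by
  ext ζ
  rw [mem_compl_iff, mem_ball, not_lt, ← sq_le_sq₀ hr dist_nonneg, sq_dist_ofReal, liftHalfSpace,
    mem_ofPred_eq]
  constructor <;> intro h <;> linarith

lemma exists_liftHalfSpace_eq_closedBall (p r : ℝ) :
    ∃ a b u, liftHalfSpace a b u = closedBall (p : ℂ) r := by
  rcases le_or_gt 0 r with hr | hr
  · exact ⟨_, _, _, (closedBall_ofReal_eq_liftHalfSpace p hr).symm⟩
  · refine ⟨0, 0, -1, ?_⟩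
    rw [closedBall_eq_empty.2 hr, eq_empty_iff_forall_notMem]
    simp [liftHalfSpace]

-- Completing the square.
lemma mem_liftHalfSpace_iff {a b u : ℝ} (hb : b ≠ 0) (ζ : ℂ) :
    ζ ∈ liftHalfSpace a b u ↔
      b * dist ζ ↑(-a / (2 * b)) ^ 2 ≤ b * (u / b + (a / (2 * b)) ^ 2) := by
  rw [sq_dist_ofReal, liftHalfSpace, mem_ofPred_eq]
  have : b * (normSq ζ - 2 * (-a / (2 * b)) * ζ.re + (-a / (2 * b)) ^ 2) =
      a * ζ.re + b * normSq ζ - u + b * (u / b + (a / (2 * b)) ^ 2) := by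
    field_simp
    ring
  constructor <;> intro h <;> linarith

lemma exists_liftHalfSpace_eq_closedBall_of_pos (a u : ℝ) {b : ℝ} (hb : 0 < b) :
    ∃ p r : ℝ, liftHalfSpace a b u = closedBall (p : ℂ) r := by
  set R := u / b + (a / (2 * b)) ^ 2
  refine ⟨-a / (2 * b), if 0 ≤ R then √R else -1, Set.ext fun ζ => ?_⟩
  rw [mem_liftHalfSpace_iff hb.ne', mul_le_mul_iff_right₀ hb, mem_closedBall]
  split_ifs with hR
  · rw [Real.le_sqrt dist_nonneg hR]
  · constructor <;> intro h <;> nlinarith [dist_nonneg (x := ζ) (y := ↑(-a / (2 * b)))]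

lemma liftHalfSpace_eq_univ_or_compl_ball_of_neg (a u : ℝ) {b : ℝ} (hb : b < 0) :
    liftHalfSpace a b u = univ ∨
      ∃ p r : ℝ, 0 < r ∧ liftHalfSpace a b u = (ball (p : ℂ) r)ᶜ := by
  set R := u / b + (a / (2 * b)) ^ 2
  have hmem (ζ : ℂ) : ζ ∈ liftHalfSpace a b u ↔ R ≤ dist ζ ↑(-a / (2 * b)) ^ 2 := by
    rw [mem_liftHalfSpace_iff hb.ne, mul_le_mul_left_of_neg hb]
  rcases le_or_gt R 0 with hR | hR
  · exact .inl (eq_univ_of_forall fun ζ => (hmem ζ).2 (hR.trans (sq_nonneg _)))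
  · refine .inr ⟨-a / (2 * b), √R, Real.sqrt_pos.2 hR, Set.ext fun ζ => ?_⟩
    rw [hmem, mem_compl_iff, mem_ball, not_lt, Real.sqrt_le_left dist_nonneg]

lemma exists_liftHalfSpace_iff_closedBall_subset (a b u : ℝ) {ε : ℝ} (hε : 0 ≤ ε) :
    ∃ a' b' u', ∀ ζ, ζ ∈ liftHalfSpace a' b' u' ↔ closedBall ζ ε ⊆ liftHalfSpace a b u := by
  rcases lt_trichotomy b 0 with hb | rfl | hb
  · rcases liftHalfSpace_eq_univ_or_compl_ball_of_neg a u hb with h | ⟨p, r, hr, h⟩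
    · exact ⟨0, 0, 0, fun ζ => by rw [h]; simp [liftHalfSpace]⟩
    · refine ⟨2 * p, -1, p ^ 2 - (r + ε) ^ 2, fun ζ => ?_⟩
      rw [h, closedBall_subset_compl_ball_iff hε hr,
        ← compl_ball_ofReal_eq_liftHalfSpace p (by positivity : 0 ≤ r + ε), mem_compl_iff,
        mem_ball, not_lt]
  · exact ⟨a, 0, u - |a| * ε, fun ζ => (closedBall_subset_liftHalfSpace_zero_iff hε a u).symm⟩
  · obtain ⟨p, r, h⟩ := exists_liftHalfSpace_eq_closedBall_of_pos a u hb
    obtain ⟨a', b', u', h'⟩ := exists_liftHalfSpace_eq_closedBall p (r - ε)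
    refine ⟨a', b', u', fun ζ => ?_⟩
    rw [h, h', closedBall_subset_closedBall_iff hε, mem_closedBall, le_sub_iff_add_le]

lemma subset_QSet (S : Set ℂ) : S ⊆ QSet S :=
  fun l hl => subset_closure (subset_convexHull ℝ _ ⟨l, hl, by ring⟩)

lemma QSet_empty : QSet ∅ = ∅ := by
  simp [QSet, sigmaSet]

lemma QSet_univ : QSet univ = univ :=
  eq_univ_of_univ_subset (subset_QSet univ)

lemma isClosed_QSet {S : Set ℂ} (hS : Bornology.IsBounded S) : IsClosed (QSet S) := by
  have : QSet S = parabolaLift ⁻¹' liftHull S := Set.ext fun z => mem_QSet_iff hS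
  rw [this]
  exact isClosed_closure.preimage continuous_parabolaLift

lemma closedNbhd_empty {ε : ℝ} (hε : 0 ≤ ε) : closedNbhd ∅ ε = univ := by
  simp [closedNbhd, hε]

lemma closedBall_subset_closedNbhd {S : Set ℂ} {l : ℂ} (hl : l ∈ S) (ε : ℝ) :
    closedBall l ε ⊆ closedNbhd S ε :=
  fun _ hμ => (infDist_le_dist_of_mem hl).trans hμ

lemma exists_dist_le_of_mem_closedNbhd {S : Set ℂ} (hS : IsCompact S) (hne : S.Nonempty)
    {ε : ℝ} {μ : ℂ} (hμ : μ ∈ closedNbhd S ε) : ∃ l ∈ S, dist μ l ≤ ε := by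
  obtain ⟨l, hl, h⟩ := hS.exists_infDist_eq_dist hne μ
  exact ⟨l, hl, h ▸ hμ⟩

lemma isBounded_closedNbhd {S : Set ℂ} (hS : IsCompact S) (hne : S.Nonempty) (ε : ℝ) :
    Bornology.IsBounded (closedNbhd S ε) :=
  hS.isBounded.cthickening.subset fun μ hμ =>
    let ⟨l, hl, h⟩ := exists_dist_le_of_mem_closedNbhd hS hne hμ
    mem_cthickening_of_dist_le μ l ε S hl h

lemma mem_QSet_closedNbhd_of_infDist_le {S : Set ℂ} (hS : IsCompact S) (hne : S.Nonempty)
    {ε : ℝ} (hε : 0 ≤ ε) {z : ℂ} (hz : infDist z (QSet S) ≤ ε) :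
    z ∈ QSet (closedNbhd S ε) := by
  obtain ⟨w, hw, hzw⟩ :=
    (isClosed_QSet hS.isBounded).exists_infDist_eq_dist (hne.mono (subset_QSet S)) z
  refine mem_QSet_of_forall_liftHalfSpace fun a b u hH => ?_
  obtain ⟨a', b', u', hE⟩ := exists_liftHalfSpace_iff_closedBall_subset a b u hε
  have hS' : S ⊆ liftHalfSpace a' b' u' :=
    fun l hl => (hE l).2 ((closedBall_subset_closedNbhd hl ε).trans hH)
  refine (hE w).1 (QSet_subset_liftHalfSpace hS.isBounded hS' hw) ?_
  rw [mem_closedBall, ← hzw]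
  exact hz

def liftSection (σ : ℝ) (q : ℝ × ℝ) : ℂ := ⟨q.1, σ * √(q.2 - q.1 ^ 2)⟩

lemma continuous_liftSection (σ : ℝ) : Continuous (liftSection σ) :=
  equivRealProdCLM.symm.continuous.comp
    (by fun_prop : Continuous fun q : ℝ × ℝ => (q.1, σ * √(q.2 - q.1 ^ 2)))

lemma parabolaLift_liftSection {σ : ℝ} (hσ : |σ| = 1) {q : ℝ × ℝ} (hq : q.1 ^ 2 ≤ q.2) :
    parabolaLift (liftSection σ q) = q := by
  have hσ2 : σ ^ 2 = 1 := by rw [← sq_abs, hσ, one_pow]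
  refine Prod.ext rfl ?_
  simp only [parabolaLift, liftSection, normSq_mk]
  linear_combination (√(q.2 - q.1 ^ 2)) ^ 2 * hσ2 + Real.sq_sqrt (sub_nonneg.2 hq)

lemma exists_liftSection_parabolaLift (z : ℂ) :
    ∃ σ : ℝ, |σ| = 1 ∧ liftSection σ (parabolaLift z) = z := by
  have hsqrt : √(normSq z - z.re ^ 2) = |z.im| := by
    rw [normSq_apply, ← Real.sqrt_sq_eq_abs]
    ring_nf
  rcases le_or_gt 0 z.im with h | h
  · exact ⟨1, abs_one, Complex.ext rfl (by simp [liftSection, parabolaLift, hsqrt, abs_of_nonneg h])⟩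
  · exact ⟨-1, by simp, Complex.ext rfl (by simp [liftSection, parabolaLift, hsqrt, abs_of_neg h])⟩

lemma sq_dist_liftSection {σ : ℝ} (hσ : |σ| = 1) (q q' : ℝ × ℝ) :
    dist (liftSection σ q) (liftSection σ q') ^ 2 =
      (q.1 - q'.1) ^ 2 + (√(q.2 - q.1 ^ 2) - √(q'.2 - q'.1 ^ 2)) ^ 2 := by
  have hσ2 : σ ^ 2 = 1 := by rw [← sq_abs, hσ, one_pow]
  rw [dist_eq, Complex.sq_norm, normSq_apply]
  simp only [liftSection, sub_re, sub_im]
  linear_combination (√(q.2 - q.1 ^ 2) - √(q'.2 - q'.1 ^ 2)) ^ 2 * hσ2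

section WeightedSums

variable {ι : Type*} [Fintype ι] {c : ι → ℝ}

lemma sum_smul_parabolaLift (μ : ι → ℂ) :
    ∑ i, c i • parabolaLift (μ i) = (∑ i, c i * (μ i).re, ∑ i, c i * normSq (μ i)) := by
  ext <;> simp [parabolaLift, Prod.fst_sum, Prod.snd_sum]

lemma sum_mul_normSq_sub_mean (hc1 : ∑ i, c i = 1) (μ : ι → ℂ) :
    ∑ i, c i * normSq (μ i - ↑(∑ j, c j * (μ j).re)) =
      ∑ i, c i * normSq (μ i) - (∑ j, c j * (μ j).re) ^ 2 := by
  set m := ∑ j, c j * (μ j).re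
  have h i : c i * normSq (μ i - m) =
      c i * normSq (μ i) - 2 * m * (c i * (μ i).re) + m ^ 2 * c i := by
    rw [normSq_sub_ofReal]
    ring
  simp_rw [h, Finset.sum_add_distrib, Finset.sum_sub_distrib, ← Finset.mul_sum, hc1]
  ring

-- The triangle inequality `(‖X‖ - ‖Y‖)² ≤ ‖X - Y‖²` in `L²(c)`, via Cauchy–Schwarz.
lemma sq_sqrt_sub_sqrt_le (hc0 : ∀ i, 0 ≤ c i) (X Y : ι → ℂ) :
    (√(∑ i, c i * normSq (X i)) - √(∑ i, c i * normSq (Y i))) ^ 2 ≤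
      ∑ i, c i * normSq (X i - Y i) := by
  have hX i : 0 ≤ c i * normSq (X i) := mul_nonneg (hc0 i) (normSq_nonneg _)
  have hY i : 0 ≤ c i * normSq (Y i) := mul_nonneg (hc0 i) (normSq_nonneg _)
  have hterm i :
      c i * (X i * conj (Y i)).re ≤ √(c i * normSq (X i)) * √(c i * normSq (Y i)) := by
    have hprod : c i * normSq (X i) * (c i * normSq (Y i)) = (c i * ‖X i * conj (Y i)‖) ^ 2 := by
      rw [norm_mul, RCLike.norm_conj, normSq_eq_norm_sq, normSq_eq_norm_sq]
      ring
    rw [← Real.sqrt_mul (hX i), hprod, Real.sqrt_sq (mul_nonneg (hc0 i) (norm_nonneg _))]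
    exact mul_le_mul_of_nonneg_left (re_le_norm _) (hc0 i)
  have hCS := (Finset.sum_le_sum fun i _ => hterm i).trans
    (Real.sum_sqrt_mul_sqrt_le Finset.univ hX hY)
  have hexp : ∑ i, c i * normSq (X i - Y i) = ∑ i, c i * normSq (X i) +
      ∑ i, c i * normSq (Y i) - 2 * ∑ i, c i * (X i * conj (Y i)).re := by
    simp_rw [normSq_sub, mul_sub, mul_add, Finset.sum_sub_distrib, Finset.sum_add_distrib,
      Finset.mul_sum]
    ring_nf
  rw [hexp, sub_sq, Real.sq_sqrt (Finset.sum_nonneg fun i _ => hX i),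
    Real.sq_sqrt (Finset.sum_nonneg fun i _ => hY i)]
  linarith

lemma sq_dist_liftSection_sum_le {σ : ℝ} (hσ : |σ| = 1) (hc0 : ∀ i, 0 ≤ c i)
    (hc1 : ∑ i, c i = 1) (μ ν : ι → ℂ) :
    dist (liftSection σ (∑ i, c i • parabolaLift (μ i)))
        (liftSection σ (∑ i, c i • parabolaLift (ν i))) ^ 2 ≤
      ∑ i, c i * normSq (μ i - ν i) := by
  rw [sq_dist_liftSection hσ, sum_smul_parabolaLift, sum_smul_parabolaLift,
    ← sum_mul_normSq_sub_mean hc1 μ, ← sum_mul_normSq_sub_mean hc1 ν]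
  set m := ∑ j, c j * (μ j).re
  set m' := ∑ j, c j * (ν j).re
  have hdiff := sum_mul_normSq_sub_mean hc1 (fun i => μ i - ν i)
  have hm : ∑ j, c j * (μ j - ν j).re = m - m' := by
    simp [m, m', mul_sub, Finset.sum_sub_distrib]
  simp only [hm] at hdiff
  have hsub : ∀ i, μ i - ν i - ↑(m - m') = (μ i - ↑m) - (ν i - ↑m') := fun i => by
    push_cast; ring
  simp only [hsub] at hdiff
  linarith [sq_sqrt_sub_sqrt_le hc0 (fun i => μ i - m) (fun i => ν i - m')]

end WeightedSums

lemma exists_mem_QSet_dist_liftSection_le {S : Set ℂ} (hS : IsCompact S) (hne : S.Nonempty)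
    {ε σ : ℝ} (hε : 0 ≤ ε) (hσ : |σ| = 1) {q : ℝ × ℝ}
    (hq : q ∈ convexHull ℝ (parabolaLift '' closedNbhd S ε)) :
    ∃ w ∈ QSet S, dist (liftSection σ q) w ≤ ε := by
  obtain ⟨ι, _, c, y, hc0, hc1, hy, rfl⟩ := mem_convexHull_iff_exists_fintype.1 hq
  choose μ hμ hμy using hy
  obtain rfl : y = fun i => parabolaLift (μ i) := funext fun i => (hμy i).symm
  choose ν hν hdist using fun i => exists_dist_le_of_mem_closedNbhd hS hne (hμ i)
  have hq' : ∑ i, c i • parabolaLift (ν i) ∈ convexHull ℝ (parabolaLift '' S) :=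
    mem_convexHull_of_exists_fintype c _ hc0 hc1 (fun i => mem_image_of_mem _ (hν i)) rfl
  refine ⟨liftSection σ (∑ i, c i • parabolaLift (ν i)), mem_QSet_of_parabolaLift_mem ?_, ?_⟩
  · rw [parabolaLift_liftSection hσ (liftHull_subset_epigraph S (subset_closure hq'))]
    exact subset_closure hq'
  refine le_of_pow_le_pow_left₀ two_ne_zero hε
    ((sq_dist_liftSection_sum_le hσ hc0 hc1 μ ν).trans ?_)
  calc ∑ i, c i * normSq (μ i - ν i) ≤ ∑ i, c i * ε ^ 2 := by
        refine Finset.sum_le_sum fun i _ => mul_le_mul_of_nonneg_left ?_ (hc0 i)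
        rw [normSq_eq_norm_sq, ← dist_eq]
        exact pow_le_pow_left₀ dist_nonneg (hdist i) 2
    _ = ε ^ 2 := by rw [← Finset.sum_mul, hc1, one_mul]

lemma infDist_QSet_le_of_mem_QSet_closedNbhd {S : Set ℂ} (hS : IsCompact S) (hne : S.Nonempty)
    {ε : ℝ} (hε : 0 ≤ ε) {z : ℂ} (hz : z ∈ QSet (closedNbhd S ε)) :
    infDist z (QSet S) ≤ ε := by
  obtain ⟨σ, hσ, hzσ⟩ := exists_liftSection_parabolaLift z
  have hclosed : IsClosed {q | infDist (liftSection σ q) (QSet S) ≤ ε} :=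
    isClosed_le ((continuous_infDist_pt _).comp (continuous_liftSection σ)) continuous_const
  have hsub : convexHull ℝ (parabolaLift '' closedNbhd S ε) ⊆
      {q | infDist (liftSection σ q) (QSet S) ≤ ε} := fun q hq => by
    obtain ⟨w, hw, hd⟩ := exists_mem_QSet_dist_liftSection_le hS hne hε hσ hq
    exact (infDist_le_dist_of_mem hw).trans hd
  have := closure_minimal hsub hclosed ((mem_QSet_iff (isBounded_closedNbhd hS hne ε)).1 hz)
  rwa [mem_ofPred_eq, hzσ] at this

/-- Corollary 2.3 (first part): `Q([Σ]_ε) = [Q(Σ)]_ε` for compact `Σ` and `ε > 0`. -/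
theorem stmt4 (S : Set ℂ) (hS : IsCompact S) (ε : ℝ) (hε : 0 < ε) :
    QSet (closedNbhd S ε) = closedNbhd (QSet S) ε := by
  rcases S.eq_empty_or_nonempty with rfl | hne
  · rw [closedNbhd_empty hε.le, QSet_univ, QSet_empty, closedNbhd_empty hε.le]
  ext z
  exact ⟨infDist_QSet_le_of_mem_QSet_closedNbhd hS hne hε.le,
    mem_QSet_closedNbhd_of_infDist_le hS hne hε.le⟩

end
end

section
/- Let Σ ⊆ ℂ be compact, ε > 0, and z ∉ [Q(Σ)]_ε. Then dist(0, conv(Σ_z)) ≥ ε². -/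
/-!
Writing `λ = a + ib`, one has `(λ − y)(conj λ − y) = y² − 2ay + |λ|²`, which is affine in
`(a, |λ|²)`. Hence every `w ∈ conv(Σ_z)` equals `z² − 2az + b` for a point `(a, b)` of the convex
hull of `{(Re λ, |λ|²) : λ ∈ Σ}`, which lies above the parabola `b ≥ a²`. So
`w = (z − μ)(z − conj μ)` with `μ = a + i√(b − a²)`, and the same point `(a, b)` shows that `μ` and
`conj μ` lie in `Q(Σ)`; both factors therefore have modulus `> ε`.
-/

open scoped ComplexConjugate
open Complex

noncomputable section

def quadAff (y : ℂ) : ℝ × ℝ →ᵃ[ℝ] ℂ :=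
  ((-2 * y) • (ofRealLI.toLinearMap ∘ₗ LinearMap.fst ℝ ℝ ℝ) +
      ofRealLI.toLinearMap ∘ₗ LinearMap.snd ℝ ℝ ℝ).toAffineMap +
    AffineMap.const ℝ (ℝ × ℝ) (y ^ 2)

@[simp]
lemma quadAff_apply (y : ℂ) (p : ℝ × ℝ) : quadAff y p = y ^ 2 - 2 * p.1 * y + p.2 := by
  change -2 * y * p.1 + p.2 + y ^ 2 = _
  ring

def reNormSq (l : ℂ) : ℝ × ℝ := (l.re, normSq l)

lemma sigmaSet_eq_image_reNormSq (S : Set ℂ) (y : ℂ) :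
    sigmaSet S y = quadAff y '' (reNormSq '' S) := by
  rw [sigmaSet, Set.image_image]
  refine Set.image_congr fun l _ => ?_
  have hre := add_conj l
  push_cast at hre
  rw [quadAff_apply, reNormSq]
  linear_combination mul_conj l - y * hre

lemma mem_convexHull_sigmaSet {S : Set ℂ} {y w : ℂ} :
    w ∈ convexHull ℝ (sigmaSet S y) ↔ ∃ p ∈ convexHull ℝ (reNormSq '' S), quadAff y p = w := by
  rw [sigmaSet_eq_image_reNormSq, ← AffineMap.image_convexHull, Set.mem_image]

lemma convexHull_reNormSq_subset (S : Set ℂ) :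
    convexHull ℝ (reNormSq '' S) ⊆ {p | p.1 ^ 2 ≤ p.2} := by
  refine convexHull_min ?_ ?_
  · rintro _ ⟨l, -, rfl⟩
    simp only [reNormSq, Set.mem_ofPred_eq, normSq_apply]
    nlinarith [sq_nonneg l.im]
  · simpa using (even_two.convexOn_pow (𝕜 := ℝ)).convex_epigraph

def quadRoot (p : ℝ × ℝ) : ℂ := ⟨p.1, √(p.2 - p.1 ^ 2)⟩

lemma quadAff_eq_mul {p : ℝ × ℝ} (hp : p.1 ^ 2 ≤ p.2) (y : ℂ) :
    quadAff y p = (y - quadRoot p) * (y - conj (quadRoot p)) := by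
  have hsq : (√(p.2 - p.1 ^ 2) : ℂ) ^ 2 = p.2 - p.1 ^ 2 := by
    exact_mod_cast Real.sq_sqrt (sub_nonneg.mpr hp)
  rw [quadAff_apply, quadRoot, ← re_add_im ⟨p.1, _⟩, map_add, map_mul, conj_ofReal, conj_ofReal,
    conj_I]
  linear_combination I_sq * (√(p.2 - p.1 ^ 2) : ℂ) ^ 2 - hsq

lemma mem_QSet_of_quadAff_eq_zero {S : Set ℂ} {p : ℝ × ℝ} {μ : ℂ}
    (hp : p ∈ convexHull ℝ (reNormSq '' S)) (hμ : quadAff μ p = 0) : μ ∈ QSet S :=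
  subset_closure (mem_convexHull_sigmaSet.mpr ⟨p, hp, hμ⟩)

lemma nonempty_of_mem_QSet {S : Set ℂ} {μ : ℂ} (hμ : μ ∈ QSet S) : S.Nonempty := by
  simpa [sigmaSet] using closure_nonempty_iff.mp ⟨0, hμ⟩

lemma lt_dist_of_notMem_closedNbhd {T : Set ℂ} {ε : ℝ} {z w : ℂ} (hz : z ∉ closedNbhd T ε)
    (hw : w ∈ T) : ε < dist z w :=
  lt_of_not_ge fun h => hz ((Metric.infDist_le_dist_of_mem hw).trans h)

lemma nonempty_of_notMem_closedNbhd {T : Set ℂ} {ε : ℝ} {z : ℂ} (hε : 0 ≤ ε)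
    (hz : z ∉ closedNbhd T ε) : T.Nonempty :=
  Set.nonempty_iff_ne_empty.mpr fun hT => hz (by simp [closedNbhd, hT, hε])

lemma sq_le_norm_of_mem_convexHull_sigmaSet {S : Set ℂ} {ε : ℝ} {z w : ℂ} (hε : 0 ≤ ε)
    (hz : z ∉ closedNbhd (QSet S) ε) (hw : w ∈ convexHull ℝ (sigmaSet S z)) : ε ^ 2 ≤ ‖w‖ := by
  obtain ⟨p, hp, rfl⟩ := mem_convexHull_sigmaSet.mp hw
  have hpar : p.1 ^ 2 ≤ p.2 := convexHull_reNormSq_subset S hp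
  have hroot : ∀ μ, quadAff μ p = 0 → ε < ‖z - μ‖ := fun μ hμ => by
    simpa [dist_eq_norm] using lt_dist_of_notMem_closedNbhd hz (mem_QSet_of_quadAff_eq_zero hp hμ)
  have h₁ := hroot (quadRoot p) (by simp [quadAff_eq_mul hpar])
  have h₂ := hroot (conj (quadRoot p)) (by simp [quadAff_eq_mul hpar])
  rw [quadAff_eq_mul hpar, norm_mul, sq]
  exact mul_le_mul h₁.le h₂.le hε (hε.trans h₁.le)

theorem stmt5_general (S : Set ℂ) (ε : ℝ) (hε : 0 < ε) (z : ℂ)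
    (hz : z ∉ closedNbhd (QSet S) ε) :
    ε ^ 2 ≤ Metric.infDist 0 (closure (convexHull ℝ (sigmaSet S z))) := by
  obtain ⟨μ, hμ⟩ := nonempty_of_notMem_closedNbhd hε.le hz
  obtain ⟨l, hl⟩ := nonempty_of_mem_QSet hμ
  have hne : (convexHull ℝ (sigmaSet S z)).Nonempty :=
    ⟨_, subset_convexHull ℝ _ ⟨l, hl, rfl⟩⟩
  rw [Metric.infDist_closure, Metric.le_infDist hne]
  intro w hw
  rw [dist_zero_left]
  exact sq_le_norm_of_mem_convexHull_sigmaSet hε.le hz hw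

/-- Corollary 2.3 (second part): if `z ∉ [Q(Σ)]_ε` then `dist(0, conv(Σ_z)) ≥ ε²`. -/
theorem stmt5 (S : Set ℂ) (hS : IsCompact S) (ε : ℝ) (hε : 0 < ε) (z : ℂ)
    (hz : z ∉ closedNbhd (QSet S) ε) :
    ε ^ 2 ≤ Metric.infDist 0 (closure (convexHull ℝ (sigmaSet S z))) :=
  stmt5_general S ε hε z hz

end
end

section
/- Let A be a bounded normal operator on a complex Hilbert space H and let T be the block operator matrix [[A + A*, −A*A], [I, 0]] on H ⊕ H. If w ∈ ℂ is nonzero with w ∈ ρ(A) and conj(w) ∈ ρ(A), then w ∈ ρ(T) and (T − w)^{−1} = [[ −w(A* − w)^{−1}(A − w)^{−1}, (A* − w)^{−1}(A − w)^{−1}A*A ], [ −(A* − w)^{−1}(A − w)^{−1}, −w^{−1} + w^{−1}(A* − w)^{−1}(A − w)^{−1}A*A ]]. -/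
/-!
`T` is the companion linearisation of the quadratic pencil
`Q(w) = A*A − w (A + A*) + w²`. For any companion matrix `[[B, −C], [I, 0]]` and `w ≠ 0`, if `R`
is a two-sided inverse of `C − w B + w²`, then `[[−wR, RC], [−R, −w⁻¹ + w⁻¹RC]]` is a two-sided
inverse of `[[B − w, −C], [I, −w]]`, as an entrywise computation shows. Normality of `A` gives
`Q(w) = (A − w)(A* − w)`, which is invertible with inverse `(A* − w)⁻¹(A − w)⁻¹` because
`w ∈ ρ(A)` and `w ∈ ρ(A*)`, the latter being `conj w ∈ ρ(A)`.
-/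

open scoped InnerProductSpace ComplexConjugate
open Complex ContinuousLinearMap

noncomputable section

variable {H : Type*} [NormedAddCommGroup H] [InnerProductSpace ℂ H] [CompleteSpace H]

/-- Block operator matrix `[[B11, B12],[B21, B22]]` on `E × E`. -/
def block2 {E : Type*} [NormedAddCommGroup E] [NormedSpace ℂ E]
    (B11 B12 B21 B22 : E →L[ℂ] E) : (E × E) →L[ℂ] (E × E) :=
  ((B11 ∘L ContinuousLinearMap.fst ℂ E E) + (B12 ∘L ContinuousLinearMap.snd ℂ E E)).prod
  ((B21 ∘L ContinuousLinearMap.fst ℂ E E) + (B22 ∘L ContinuousLinearMap.snd ℂ E E))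

/-- The linearisation `T = [[A + A*, −A*A],[I, 0]]` on `H × H`. -/
def blockT (A : H →L[ℂ] H) : (H × H) →L[ℂ] (H × H) :=
  block2 (A + ContinuousLinearMap.adjoint A) (-(ContinuousLinearMap.adjoint A * A)) 1 0

theorem notMem_spectrum_iff_isUnit_sub_smul_one {R A : Type*} [CommRing R] [Ring A]
    [Algebra R A] {r : R} {a : A} : r ∉ spectrum R a ↔ IsUnit (a - r • 1) := by
  rw [spectrum.notMem_iff, Algebra.algebraMap_eq_smul_one, ← IsUnit.neg_iff, neg_sub]

theorem Commute.sub_smul_one_mul_sub_smul_one {R A : Type*} [CommRing R] [Ring A]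
    [Algebra R A] {a b : A} (h : Commute a b) (r : R) :
    (a - r • 1) * (b - r • 1) = b * a - r • (a + b) + r ^ 2 • 1 := by
  simp only [sub_mul, mul_sub, smul_mul_assoc, mul_smul_comm, one_mul, mul_one, h.eq]
  module

section BlockOperator

variable {E : Type*} [NormedAddCommGroup E] [NormedSpace ℂ E]

theorem block2_mul (a b c d e f g h : E →L[ℂ] E) :
    block2 a b c d * block2 e f g h =
      block2 (a * e + b * g) (a * f + b * h) (c * e + d * g) (c * f + d * h) := by
  refine ContinuousLinearMap.ext fun ⟨x, y⟩ ↦ ?_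
  simp only [block2, mul_apply_eq_comp, ContinuousLinearMap.prod_apply, add_apply, comp_apply,
    coe_fst', coe_snd', map_add, add_comp, Prod.ext_iff]
  constructor <;> abel

theorem block2_one : block2 (1 : E →L[ℂ] E) 0 0 1 = 1 := by
  refine ContinuousLinearMap.ext fun ⟨x, y⟩ ↦ ?_
  simp [block2]

theorem block2_sub_smul_one (a b c d : E →L[ℂ] E) (w : ℂ) :
    block2 a b c d - w • 1 = block2 (a - w • 1) b c (d - w • 1) := by
  refine ContinuousLinearMap.ext fun ⟨x, y⟩ ↦ ?_
  simp only [block2, sub_apply, ContinuousLinearMap.prod_apply, add_apply, comp_apply, coe_fst',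
    coe_snd', smul_apply, one_apply_eq_self, Prod.smul_mk, Prod.mk_sub_mk, sub_comp, smul_comp,
    Prod.ext_iff]
  constructor <;> abel

theorem block2_companion_sub_smul_one_mul_resolvent_eq_one (B C R : E →L[ℂ] E) {w : ℂ} (hw : w ≠ 0)
    (hQR : (C - w • B + w ^ 2 • 1) * R = 1) (hRQ : R * (C - w • B + w ^ 2 • 1) = 1) :
    (block2 B (-C) 1 0 - w • 1) *
        block2 ((-w) • R) (R * C) (-R) ((-w⁻¹) • 1 + w⁻¹ • (R * C)) = 1 ∧
      block2 ((-w) • R) (R * C) (-R) ((-w⁻¹) • 1 + w⁻¹ • (R * C)) *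
        (block2 B (-C) 1 0 - w • 1) = 1 := by
  rw [block2_sub_smul_one, block2_mul, block2_mul, ← block2_one]
  have hQRC := congrArg (· * C) hQR
  simp only [mul_add, add_mul, mul_sub, sub_mul, neg_mul, mul_neg, smul_mul_assoc, mul_smul_comm,
    one_mul, mul_one, mul_zero, zero_mul, smul_smul, mul_assoc, smul_sub] at hQR hRQ hQRC ⊢
  refine ⟨?_, ?_⟩ <;> congr 1
  · linear_combination (norm := module) hQR
  · linear_combination (norm := match_scalars <;> field_simp <;> ring) (-w⁻¹) • hQRC
  · module
  · match_scalars <;> simp [hw]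
  · linear_combination (norm := module) hRQ
  · module
  · linear_combination (norm := match_scalars <;> field_simp <;> ring) w⁻¹ • hRQ
  · match_scalars <;> simp [hw]

end BlockOperator

/-- The explicit formula for the resolvent of the linearisation `T` at a nonzero point `w`
with `w ∈ ρ(A)` and `conj w ∈ ρ(A)` (i.e. `w ∈ ρ(A*)`). -/
theorem stmt6 (A : H →L[ℂ] H) (hA : IsStarNormal A) (w : ℂ) (hw0 : w ≠ 0)
    (hwA : w ∉ spectrum ℂ A) (hwAstar : conj w ∉ spectrum ℂ A) :
    w ∉ spectrum ℂ (blockT A) ∧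
      Ring.inverse (blockT A - w • 1) =
        block2
          ((-w) • (Ring.inverse (ContinuousLinearMap.adjoint A - w • 1) *
            Ring.inverse (A - w • 1)))
          (Ring.inverse (ContinuousLinearMap.adjoint A - w • 1) * Ring.inverse (A - w • 1) *
            (ContinuousLinearMap.adjoint A * A))
          (-(Ring.inverse (ContinuousLinearMap.adjoint A - w • 1) * Ring.inverse (A - w • 1)))
          ((-w⁻¹) • 1 + w⁻¹ • (Ring.inverse (ContinuousLinearMap.adjoint A - w • 1) *
            Ring.inverse (A - w • 1) * (ContinuousLinearMap.adjoint A * A))) := by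
  have hAw : IsUnit (A - w • 1) := notMem_spectrum_iff_isUnit_sub_smul_one.1 hwA
  have hAdw : IsUnit (adjoint A - w • 1) := by
    rw [← notMem_spectrum_iff_isUnit_sub_smul_one, ← star_eq_adjoint, spectrum.map_star]
    exact hwAstar
  -- This order of the factors, forced by the order of the inverses in the formula, needs normality.
  have hQ : (A - w • 1) * (adjoint A - w • 1) =
      adjoint A * A - w • (A + adjoint A) + w ^ 2 • 1 := by
    rw [← star_eq_adjoint]
    exact hA.star_comm_self.symm.sub_smul_one_mul_sub_smul_one w
  have hQR : (adjoint A * A - w • (A + adjoint A) + w ^ 2 • 1) *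
      (Ring.inverse (adjoint A - w • 1) * Ring.inverse (A - w • 1)) = 1 := by
    rw [← hQ, mul_assoc, Ring.mul_inverse_cancel_left _ _ hAdw, Ring.mul_inverse_cancel _ hAw]
  have hRQ : (Ring.inverse (adjoint A - w • 1) * Ring.inverse (A - w • 1)) *
      (adjoint A * A - w • (A + adjoint A) + w ^ 2 • 1) = 1 := by
    rw [← hQ, mul_assoc, Ring.inverse_mul_cancel_left _ _ hAw, Ring.inverse_mul_cancel _ hAdw]
  obtain ⟨hTR, hRT⟩ := block2_companion_sub_smul_one_mul_resolvent_eq_one _ _ _ hw0 hQR hRQ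
  exact ⟨notMem_spectrum_iff_isUnit_sub_smul_one.2 ⟨⟨_, _, hTR, hRT⟩, rfl⟩,
    Ring.inverse_unit ⟨_, _, hTR, hRT⟩⟩

end
end
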